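/- Let q be a self-join-free Boolean conjunctive query and F an atom of q with zero indegree in the attack graph of q (no atom attacks F). Let r be a repair of some database, A ∈ r a fact relevant for q in r, B key-equal to A, and r_B = (r \ {A}) ∪ {B}. Then for every valuation ζ over key(F), if r_B ⊨ ζ(q) then r ⊨ ζ(q). -/

import Mathlib

/-- A fact `R(a₁,…,aₙ)`: relation name, primary-key values, non-key values. -/
structure DBFact where
  rel : ℕ
  key : List ℕ
  rest : List ℕ
deriving DecidableEq

/-- Two facts are key-equal if they have the same relation name and primary-key value. -/
def keyEq (A B : DBFact) : Prop := A.rel = B.rel ∧ A.key = B.key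

instance (A B : DBFact) : Decidable (keyEq A B) :=
  inferInstanceAs (Decidable (_ ∧ _))

/-- A set of facts is consistent if it contains no two distinct key-equal facts. -/
def Consistent (s : Finset DBFact) : Prop := ∀ A ∈ s, ∀ B ∈ s, keyEq A B → A = B

/-- A repair of `db` is a maximal (w.r.t. ⊆) consistent subset of `db`. -/
def Repair (db r : Finset DBFact) : Prop :=
  r ⊆ db ∧ Consistent r ∧ ∀ r', r' ⊆ db → Consistent r' → r ⊆ r' → r = r'

/-- A term is a variable (inl) or a constant (inr). -/
abbrev Term := ℕ ⊕ ℕ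

/-- An atom `R(t₁,…,tₙ)` with key positions and non-key positions. -/
structure Atom where
  rel : ℕ
  key : List Term
  rest : List Term
deriving DecidableEq

def termVars (l : List Term) : Finset ℕ := (l.filterMap fun t => t.getLeft?).toFinset

/-- Variables at primary-key positions of an atom. -/
def keyVars (F : Atom) : Finset ℕ := termVars F.key

/-- All variables of an atom. -/
def atomVars (F : Atom) : Finset ℕ := termVars F.key ∪ termVars F.rest

/-- A query (finite set of atoms) is self-join-free: no relation name occurs twice. -/
def SJF (q : Finset Atom) : Prop := ∀ F ∈ q, ∀ G ∈ q, F.rel = G.rel → F = G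

/-- Apply a valuation (total map from variables to constants) to an atom, yielding a fact. -/
def applyVal (θ : ℕ → ℕ) (F : Atom) : DBFact :=
  ⟨F.rel, F.key.map (Sum.elim θ id), F.rest.map (Sum.elim θ id)⟩

/-- Semantic implication of a functional dependency `X → Y` by a set of FDs
(two-tuple semantics, which is equivalent to the standard one for FDs). -/
def FDImplies (fds : Set (Set ℕ × Set ℕ)) (X Y : Set ℕ) : Prop :=
  ∀ θ μ : ℕ → ℕ,
    (∀ p ∈ fds, (∀ v ∈ p.1, θ v = μ v) → ∀ v ∈ p.2, θ v = μ v) →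
    (∀ v ∈ X, θ v = μ v) → ∀ v ∈ Y, θ v = μ v

/-- `FD(q) = { key(F) → vars(F) : F ∈ q }`. -/
def FDs (q : Finset Atom) : Set (Set ℕ × Set ℕ) :=
  {p | ∃ F ∈ q, p = ((keyVars F : Set ℕ), (atomVars F : Set ℕ))}

/-- `F⁺ = { x : FD(q \ {F}) ⊨ key(F) → x }`. -/
def plus (q : Finset Atom) (F : Atom) : Set ℕ :=
  {x | FDImplies (FDs (q.erase F)) (keyVars F : Set ℕ) {x}}

/-- One step of a witness for an attack by `F`: consecutive atoms share a variable outside `F⁺`. -/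
def AttackStep (q : Finset Atom) (F : Atom) (A B : Atom) : Prop :=
  ¬ ((atomVars A ∩ atomVars B : Finset ℕ) : Set ℕ) ⊆ plus q F

/-- `F` attacks `G` in the attack graph of `q`. -/
def Attacks (q : Finset Atom) (F G : Atom) : Prop :=
  F ≠ G ∧ F ∈ q ∧ ∃ L : List Atom, (∀ A ∈ L, A ∈ q) ∧
    List.Chain (AttackStep q F) F L ∧ (F :: L).getLast (List.cons_ne_nil F L) = G

/-- `F` attacks the variable `z`. -/
def AttacksVar (q : Finset Atom) (F : Atom) (z : ℕ) : Prop :=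
  z ∉ plus q F ∧ F ∈ q ∧ ∃ L : List Atom, (∀ A ∈ L, A ∈ q) ∧
    List.Chain (AttackStep q F) F L ∧ z ∈ atomVars ((F :: L).getLast (List.cons_ne_nil F L))

/-- `r ⊨ ζ(q)` for a valuation `ζ` over the variable set `X`. -/
def Sat (r : Finset DBFact) (q : Finset Atom) (X : Finset ℕ) (ζ : ℕ → ℕ) : Prop :=
  ∃ θ : ℕ → ℕ, (∀ v ∈ X, θ v = ζ v) ∧ ∀ F ∈ q, applyVal θ F ∈ r

/-- `r ⊨ q`. -/
def Sat0 (r : Finset DBFact) (q : Finset Atom) : Prop :=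
  ∃ θ : ℕ → ℕ, ∀ F ∈ q, applyVal θ F ∈ r

/-- A fact `A` is relevant for `q` in `r` if `A ∈ θ(q) ⊆ r` for some valuation `θ`. -/
def Relevant (A : DBFact) (q : Finset Atom) (r : Finset DBFact) : Prop :=
  ∃ θ : ℕ → ℕ, (∃ F ∈ q, applyVal θ F = A) ∧ ∀ F ∈ q, applyVal θ F ∈ r

/-! The witness `θ` of `ζ(q)` in `r_B` uses `B` only through the unique atom `G` with
`θ(G) = B`. Let `θ₀` witness the relevance of `A`, so `θ₀(G) = A`. The two valuations agree on
`key(G)`, and, since `r` is consistent and both map every other atom into `r`, on all of `G⁺`.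
Switching from `θ` to `θ₀` on the variables of the atoms reachable from `G` by attack steps yields a
valuation mapping all of `q` into `r`, since atoms outside that region share with it only
variables of `G⁺`. It still agrees with `ζ` on `key(F)`, because a variable of `key(F)` outside
`G⁺` in that region would make `G` attack `F`. -/

lemma mem_termVars {v : ℕ} {l : List Term} : v ∈ termVars l ↔ Sum.inl v ∈ l := by
  simp only [termVars, List.mem_toFinset, List.mem_filterMap]
  constructor
  · rintro ⟨(w | c), ht, h⟩
    · cases h; exact ht
    · simp [Sum.getLeft?] at h
  · exact fun h => ⟨Sum.inl v, h, rfl⟩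

lemma map_sumElim_eq_iff {θ μ : ℕ → ℕ} {l : List Term} :
    l.map (Sum.elim θ id) = l.map (Sum.elim μ id) ↔ Set.EqOn θ μ (termVars l) := by
  refine ⟨fun h v hv => List.map_inj_left.mp h (Sum.inl v) (mem_termVars.mp hv), fun h => ?_⟩
  refine List.map_congr_left fun t ht => ?_
  cases t with
  | inl v => exact h (mem_termVars.mpr ht)
  | inr c => rfl

lemma applyVal_eq_iff {θ μ : ℕ → ℕ} {F : Atom} :
    applyVal θ F = applyVal μ F ↔ Set.EqOn θ μ (atomVars F) := by
  simp only [applyVal, DBFact.mk.injEq, true_and, map_sumElim_eq_iff, atomVars,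
    Finset.coe_union, Set.eqOn_union]

lemma keyEq_applyVal_iff {θ μ : ℕ → ℕ} {F : Atom} :
    keyEq (applyVal θ F) (applyVal μ F) ↔ Set.EqOn θ μ (keyVars F) := by
  simp only [keyEq, applyVal, true_and, map_sumElim_eq_iff, keyVars]

lemma keyVars_subset_plus (q : Finset Atom) (F : Atom) : (keyVars F : Set ℕ) ⊆ plus q F :=
  fun _ hx _ _ _ hX _ hv => hX _ (Set.mem_singleton_iff.mp hv ▸ hx)

/-- By consistency of `r`, both valuations satisfy every dependency of `FD(q \ {G})`. -/
lemma eqOn_plus_of_consistent {q : Finset Atom} {G : Atom} {r : Finset DBFact}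
    (hr : Consistent r) {θ μ : ℕ → ℕ} (hθ : ∀ H ∈ q.erase G, applyVal θ H ∈ r)
    (hμ : ∀ H ∈ q.erase G, applyVal μ H ∈ r) (hkey : Set.EqOn θ μ (keyVars G)) :
    Set.EqOn θ μ (plus q G) := by
  refine fun x hx => hx θ μ ?_ (fun v hv => hkey hv) x rfl
  rintro _ ⟨H, hH, rfl⟩ hHkey
  exact applyVal_eq_iff.mp
    (hr _ (hθ H hH) _ (hμ H hH) (keyEq_applyVal_iff.mpr fun v hv => hHkey v hv))

section AttackReach

variable {q : Finset Atom} {G H H' : Atom}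

/-- `Attacks q G H` unfolds to `G ≠ H ∧ G ∈ q ∧ AttackReach q G H`. -/
def AttackReach (q : Finset Atom) (G H : Atom) : Prop :=
  ∃ L : List Atom, (∀ X ∈ L, X ∈ q) ∧ (G :: L).IsChain (AttackStep q G) ∧
    (G :: L).getLast (List.cons_ne_nil G L) = H

lemma attackReach_self : AttackReach q G G :=
  ⟨[], by simp, List.IsChain.singleton G, rfl⟩

lemma AttackReach.step (hH : AttackReach q G H) (hH'q : H' ∈ q)
    (hstep : AttackStep q G H H') : AttackReach q G H' := by
  obtain ⟨L, hLq, hchain, rfl⟩ := hH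
  refine ⟨L ++ [H'], ?_, ?_, by simp⟩
  · simpa [or_imp, forall_and] using ⟨hLq, hH'q⟩
  · rw [← List.cons_append]
    exact hchain.append (List.IsChain.singleton H')
      (by simp [List.getLast?_eq_some_getLast, hstep])

lemma AttacksVar.exists_attackReach {z : ℕ} (h : AttacksVar q G z) :
    ∃ H, AttackReach q G H ∧ z ∈ atomVars H := by
  obtain ⟨-, -, L, hLq, hchain, hz⟩ := h
  exact ⟨_, ⟨L, hLq, hchain, rfl⟩, hz⟩

lemma attacksVar_of_attackReach (hG : G ∈ q) (hH : AttackReach q G H) {z : ℕ}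
    (hz : z ∈ atomVars H) (hzG : z ∉ plus q G) : AttacksVar q G z := by
  obtain ⟨L, hLq, hchain, rfl⟩ := hH
  exact ⟨hzG, hG, L, hLq, hchain, hz⟩

lemma attacks_of_attacksVar {F : Atom} {z : ℕ} (h : AttacksVar q G z) (hF : F ∈ q)
    (hGF : G ≠ F) (hz : z ∈ atomVars F) : Attacks q G F := by
  obtain ⟨H, hH, hzH⟩ := h.exists_attackReach
  have hstep : AttackStep q G H F := fun hsub => h.1 (hsub (by simp [hzH, hz]))
  exact ⟨hGF, h.2.1, hH.step hF hstep⟩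

lemma not_attacksVar_of_mem_keyVars {F : Atom} (hF : F ∈ q) (hGF : ¬ Attacks q G F) {z : ℕ}
    (hz : z ∈ keyVars F) : ¬ AttacksVar q G z := by
  intro h
  by_cases hGF' : G = F
  · subst hGF'
    exact h.1 (keyVars_subset_plus q G hz)
  · exact hGF (attacks_of_attacksVar h hF hGF' (Finset.mem_union_left _ hz))

end AttackReach

theorem sat_of_eqOn_plus {q : Finset Atom} {G : Atom} (hG : G ∈ q) {s : Finset DBFact}
    {θ θ₀ : ℕ → ℕ} (hθ₀ : ∀ H ∈ q, applyVal θ₀ H ∈ s) (hθ : ∀ H ∈ q, H ≠ G → applyVal θ H ∈ s)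
    (hplus : Set.EqOn θ θ₀ (plus q G)) {X : Finset ℕ} (hX : ∀ v ∈ X, ¬ AttacksVar q G v) :
    Sat s q X θ := by
  classical
  set S : Set ℕ := {v | ∃ H, AttackReach q G H ∧ v ∈ atomVars H}
  have hmemS : ∀ {H v}, AttackReach q G H → v ∈ atomVars H → v ∈ S := fun hH hv => ⟨_, hH, hv⟩
  have hSplus : ∀ v ∈ S, ¬ AttacksVar q G v → θ₀ v = θ v := fun v ⟨H, hH, hvH⟩ hv =>
    (hplus (not_not.mp fun hvG => hv (attacksVar_of_attackReach hG hH hvH hvG))).symm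
  refine ⟨S.piecewise θ₀ θ, fun v hv => ?_, fun H hH => ?_⟩
  · by_cases hvS : v ∈ S
    · rw [Set.piecewise_eq_of_mem _ _ _ hvS]
      exact hSplus v hvS (hX v hv)
    · exact Set.piecewise_eq_of_notMem _ _ _ hvS
  by_cases hHG : AttackReach q G H
  · rw [applyVal_eq_iff.mpr ((Set.piecewise_eqOn S θ₀ θ).mono fun _ => hmemS hHG)]
    exact hθ₀ H hH
  · have hagree : Set.EqOn (S.piecewise θ₀ θ) θ (atomVars H) := by
      intro v hv
      by_cases hvS : v ∈ S
      · obtain ⟨H', hH', hvH'⟩ := hvS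
        have hnstep : ¬ AttackStep q G H' H := fun hstep => hHG (hH'.step hH hstep)
        rw [Set.piecewise_eq_of_mem _ _ _ (hmemS hH' hvH')]
        exact (hplus (not_not.mp hnstep (by simp [hvH', hv]))).symm
      · exact Set.piecewise_eq_of_notMem _ _ _ hvS
    rw [applyVal_eq_iff.mpr hagree]
    exact hθ H hH fun h => hHG (h ▸ attackReach_self)

theorem dontcare_general (q : Finset Atom) (hq : SJF q) (F : Atom) (hF : F ∈ q)
    (hind : ∀ G ∈ q, ¬ Attacks q G F)
    (r : Finset DBFact) (hr : ∃ db, Repair db r)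
    (A : DBFact) (hrel : Relevant A q r)
    (B : DBFact) (hkeq : keyEq A B) :
    ∀ ζ : ℕ → ℕ, Sat (insert B (r.erase A)) q (keyVars F) ζ → Sat r q (keyVars F) ζ := by
  rintro ζ ⟨θ, hθζ, hθ⟩
  have hθr : ∀ H ∈ q, applyVal θ H ≠ B → applyVal θ H ∈ r := fun H hH hne =>
    Finset.mem_of_mem_erase (Finset.mem_of_mem_insert_of_ne (hθ H hH) hne)
  by_cases hB : ∃ G ∈ q, applyVal θ G = B
  swap
  · exact ⟨θ, hθζ, fun H hH => hθr H hH fun h => hB ⟨H, hH, h⟩⟩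
  obtain ⟨G, hG, rfl⟩ := hB
  obtain ⟨θ₀, ⟨G₀, hG₀, rfl⟩, hθ₀⟩ := hrel
  obtain rfl : G = G₀ := hq G hG G₀ hG₀ hkeq.1.symm
  obtain ⟨-, -, hcons, -⟩ := hr
  have hθG : ∀ H ∈ q, H ≠ G → applyVal θ H ∈ r := fun H hH hHG =>
    hθr H hH fun h => hHG (hq H hH G hG (congrArg DBFact.rel h))
  have hplus : Set.EqOn θ θ₀ (plus q G) :=
    eqOn_plus_of_consistent hcons
      (fun H hH => hθG H (Finset.mem_of_mem_erase hH) (Finset.ne_of_mem_erase hH))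
      (fun H hH => hθ₀ H (Finset.mem_of_mem_erase hH))
      (keyEq_applyVal_iff.mp hkeq).symm
  obtain ⟨θ', hθ'θ, hθ'⟩ := sat_of_eqOn_plus hG hθ₀ hθG hplus
    (X := keyVars F) fun v hv => not_attacksVar_of_mem_keyVars hF (hind G hG) hv
  exact ⟨θ', fun v hv => (hθ'θ v hv).trans (hθζ v hv), hθ'⟩

/-- Lemma "dontcare": if `F` has zero indegree in the attack graph of `q`, `r` is a
repair, `A ∈ r` is relevant for `q` in `r`, and `B` is key-equal to `A`, then every
instantiation over `key(F)` true in `(r \ {A}) ∪ {B}` is true in `r`. -/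
theorem dontcare (q : Finset Atom) (hq : SJF q) (F : Atom) (hF : F ∈ q)
    (hind : ∀ G ∈ q, ¬ Attacks q G F)
    (r : Finset DBFact) (hr : ∃ db, Repair db r)
    (A : DBFact) (hA : A ∈ r) (hrel : Relevant A q r)
    (B : DBFact) (hkeq : keyEq A B) :
    ∀ ζ : ℕ → ℕ, Sat (insert B (r.erase A)) q (keyVars F) ζ → Sat r q (keyVars F) ζ :=
  dontcare_general q hq F hF hind r hr A hrel B hkeq
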